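/- In classical (extensional) logic, the intensional characterization of an infinite singleton collapses to an ordinary singleton: if V is a set in a type α such that for every predicate A : α → Prop the statements (∀ x ∈ V, A x) and (∃ x ∈ V, A x) are equivalent, then there exists z with V = {z}. -/

import Mathlib

/-- In classical (extensional) logic, a set V such that universal and
existential quantification over V coincide for every predicate is an ordinary
singleton. -/
theorem infinite_singleton_collapses {α : Type*} (V : Set α)
    (h : ∀ A : α → Prop, (∀ x ∈ V, A x) ↔ (∃ x ∈ V, A x)) :
    ∃ z : α, V = {z} := by
  refine Set.exists_eq_singleton_iff_nonempty_subsingleton.mpr ⟨?nonempty, ?subsingleton⟩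
  case nonempty =>
    obtain ⟨z, hz, -⟩ := (h fun _ => True).mp fun _ _ => trivial
    exact ⟨z, hz⟩
  case subsingleton =>
    intro x hx y hy
    exact (h (x = ·)).mpr ⟨x, hx, rfl⟩ y hy
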